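/- arXiv:2212.02113 — 6 statements merged into one kernel-verified Lean document; each statement's English description precedes it below -/
import Mathlib

section
/- Let f : ℝ≥0 → ℝ be a C¹ function (in the variable z) that decays sufficiently fast as z → +∞ (so that z f(z)² e^{ν z²/(4⟨t⟩)} → 0). Then for any 0 ≤ ν ≤ 1 and any t ≥ 0, with ⟨t⟩ = 1 + t, one has (ν/(2⟨t⟩)) ∫₀^∞ f(z)² e^{ν z²/(4⟨t⟩)} dz ≤ ∫₀^∞ (f'(z))² e^{ν z²/(4⟨t⟩)} dz. -/
open Real MeasureTheory Set Filter

/-- Weighted Poincaré inequality with Gaussian-type weight `exp (ν z² / (4⟨t⟩))`,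
`⟨t⟩ = 1 + t`, for a C¹ function decaying sufficiently fast at infinity. -/
theorem weighted_poincare
    (t ν : ℝ) (ht : 0 ≤ t) (hν0 : 0 ≤ ν) (hν1 : ν ≤ 1)
    (f : ℝ → ℝ) (hf : ContDiff ℝ 1 f)
    (hdecay : Tendsto (fun z => z * (f z) ^ 2 * Real.exp (ν * z ^ 2 / (4 * (1 + t))))
      atTop (nhds 0))
    (hint1 : IntegrableOn (fun z => (f z) ^ 2 * Real.exp (ν * z ^ 2 / (4 * (1 + t)))) (Ioi 0))
    (hint2 : IntegrableOn (fun z => (deriv f z) ^ 2 * Real.exp (ν * z ^ 2 / (4 * (1 + t)))) (Ioi 0)) :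
    ν / (2 * (1 + t)) * ∫ z in Ioi (0:ℝ), (f z) ^ 2 * Real.exp (ν * z ^ 2 / (4 * (1 + t)))
      ≤ ∫ z in Ioi (0:ℝ), (deriv f z) ^ 2 * Real.exp (ν * z ^ 2 / (4 * (1 + t))) := by
  have hT : (0:ℝ) < 1 + t := by linarith
  rcases eq_or_lt_of_le hν0 with hν | hν
  · -- trivial case ν = 0
    rw [← hν]
    simp only [zero_div, zero_mul, zero_mul]
    exact setIntegral_nonneg measurableSet_Ioi
      (fun z _ => mul_nonneg (sq_nonneg _) (Real.exp_pos _).le)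
  · set c := ν / (2 * (1 + t)) with hc_def
    have hc : 0 < c := by positivity
    set w : ℝ → ℝ := fun z => Real.exp (ν * z ^ 2 / (4 * (1 + t))) with hw_def
    have hw_pos : ∀ z, 0 < w z := fun z => Real.exp_pos _
    have hw_deriv : ∀ z, HasDerivAt w (c * z * w z) z := by
      intro z
      have h1 : HasDerivAt (fun z : ℝ => ν * z ^ 2 / (4 * (1 + t)))
          (ν * (2 * z ^ 1) / (4 * (1 + t))) z :=
        ((hasDerivAt_pow 2 z).const_mul ν).div_const (4 * (1 + t))
      have h2 := h1.exp
      convert h2 using 1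
      rw [hc_def]
      simp only [hw_def]
      rw [mul_comm (ν / (2 * (1 + t)) * z)]
      congr 1
      rw [div_mul_eq_mul_div, div_eq_div_iff (by positivity) (by positivity)]
      ring
    have hfd : Differentiable ℝ f := hf.differentiable one_ne_zero
    have hfc : Continuous f := hfd.continuous
    have hf'c : Continuous (deriv f) := hf.continuous_deriv le_rfl
    have hwc : Continuous w := by
      apply Real.continuous_exp.comp
      fun_prop
    set G : ℝ → ℝ := fun z =>
      f z ^ 2 * w z + 2 * z * f z * deriv f z * w z + c * z ^ 2 * f z ^ 2 * w z with hG_def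
    have hg_deriv : ∀ z, HasDerivAt (fun z => z * f z ^ 2 * w z) (G z) z := by
      intro z
      have h1 : HasDerivAt (fun z => z * f z ^ 2)
          (1 * f z ^ 2 + z * ((2 : ℕ) * f z ^ 1 * deriv f z)) z :=
        (hasDerivAt_id z).mul ((hfd z).hasDerivAt.pow 2)
      have h2 : HasDerivAt (fun z => z * f z ^ 2 * w z) _ z := h1.mul (hw_deriv z)
      convert h2 using 1
      simp only [hG_def]
      push_cast
      ring
    have hGc : Continuous G := by
      simp only [hG_def]
      fun_prop
    set I2 : ℝ := ∫ z in Ioi (0:ℝ), (deriv f z) ^ 2 * w z with hI2_def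
    -- key bound for each R ≥ 0
    have key : ∀ R : ℝ, 0 ≤ R →
        c * ∫ z in (0:ℝ)..R, f z ^ 2 * w z ≤ c * (R * f R ^ 2 * w R) + I2 := by
      intro R hR
      have hftc : ∫ z in (0:ℝ)..R, G z = R * f R ^ 2 * w R := by
        rw [intervalIntegral.integral_eq_sub_of_hasDerivAt (fun z _ => hg_deriv z)
          (hGc.intervalIntegrable 0 R)]
        simp
      have hpt : ∀ z, c * (f z ^ 2 * w z) - (deriv f z) ^ 2 * w z ≤ c * G z := by
        intro z
        simp only [hG_def]
        nlinarith [mul_nonneg (hw_pos z).le (sq_nonneg (deriv f z + c * z * f z))]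
      have hint_a : IntervalIntegrable
          (fun z => c * (f z ^ 2 * w z) - (deriv f z) ^ 2 * w z) volume 0 R := by
        apply Continuous.intervalIntegrable
        fun_prop
      have hint_b : IntervalIntegrable (fun z => c * G z) volume 0 R :=
        (continuous_const.mul hGc).intervalIntegrable 0 R
      have hmono := intervalIntegral.integral_mono_on hR hint_a hint_b (fun z _ => hpt z)
      rw [intervalIntegral.integral_sub (f := fun z => c * (f z ^ 2 * w z)) (g := fun z => deriv f z ^ 2 * w z)
            (((hfc.pow 2).mul hwc).intervalIntegrable 0 R |>.const_mul c)
            (((hf'c.pow 2).mul hwc).intervalIntegrable 0 R),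
          intervalIntegral.integral_const_mul, intervalIntegral.integral_const_mul,
          hftc] at hmono
      have htail : ∫ z in (0:ℝ)..R, (deriv f z) ^ 2 * w z ≤ I2 := by
        rw [intervalIntegral.integral_of_le hR, hI2_def]
        apply setIntegral_mono_set hint2
        · filter_upwards with z using mul_nonneg (sq_nonneg _) (hw_pos z).le
        · filter_upwards with z using fun hz => hz.1
      linarith
    -- pass to the limit R → ∞
    have h1 : Tendsto (fun R => c * ∫ z in (0:ℝ)..R, f z ^ 2 * w z) atTop
        (nhds (c * ∫ z in Ioi (0:ℝ), f z ^ 2 * w z)) :=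
      (intervalIntegral_tendsto_integral_Ioi 0 hint1 tendsto_id).const_mul c
    have h2 : Tendsto (fun R => c * (R * f R ^ 2 * w R) + I2) atTop (nhds (c * 0 + I2)) :=
      ((hdecay.const_mul c).add tendsto_const_nhds)
    have := le_of_tendsto_of_tendsto h1 h2
      (by filter_upwards [eventually_ge_atTop (0:ℝ)] with R hR using key R hR)
    simpa using this
end

section
/- Let f : ℝ≥0 → ℝ be a C¹ function decaying sufficiently fast as z → +∞. Then for any 0 ≤ ν ≤ 1 and t ≥ 0, with ⟨t⟩ = 1 + t, one has (ν/(4⟨t⟩)) ∫₀^∞ f(z)² e^{ν z²/(4⟨t⟩)} dz + (ν/(4⟨t⟩))² ∫₀^∞ z² f(z)² e^{ν z²/(4⟨t⟩)} dz ≤ ∫₀^∞ (f'(z))² e^{ν z²/(4⟨t⟩)} dz. -/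
open Real MeasureTheory Set Filter

/-- Strengthened weighted Poincaré inequality including the `z²/⟨t⟩²` term,
for the Gaussian-type weight `exp (ν z² / (4⟨t⟩))`, `⟨t⟩ = 1 + t`. -/
theorem weighted_poincare_strong
    (t ν : ℝ) (ht : 0 ≤ t) (hν0 : 0 ≤ ν) (hν1 : ν ≤ 1)
    (f : ℝ → ℝ) (hf : ContDiff ℝ 1 f)
    (hdecay : Tendsto (fun z => z * (f z) ^ 2 * Real.exp (ν * z ^ 2 / (4 * (1 + t))))
      atTop (nhds 0))
    (hint1 : IntegrableOn (fun z => (f z) ^ 2 * Real.exp (ν * z ^ 2 / (4 * (1 + t)))) (Ioi 0))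
    (hint2 : IntegrableOn (fun z => (deriv f z) ^ 2 * Real.exp (ν * z ^ 2 / (4 * (1 + t)))) (Ioi 0))
    (hint3 : IntegrableOn (fun z => z ^ 2 * (f z) ^ 2 * Real.exp (ν * z ^ 2 / (4 * (1 + t)))) (Ioi 0)) :
    ν / (4 * (1 + t)) * (∫ z in Ioi (0:ℝ), (f z) ^ 2 * Real.exp (ν * z ^ 2 / (4 * (1 + t))))
      + (ν / (4 * (1 + t))) ^ 2 *
        (∫ z in Ioi (0:ℝ), z ^ 2 * (f z) ^ 2 * Real.exp (ν * z ^ 2 / (4 * (1 + t))))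
      ≤ ∫ z in Ioi (0:ℝ), (deriv f z) ^ 2 * Real.exp (ν * z ^ 2 / (4 * (1 + t))) := by
  have hT0 : (0:ℝ) < 4 * (1 + t) := by linarith
  set a := ν / (4 * (1 + t)) with ha
  have ha0 : 0 ≤ a := div_nonneg hν0 hT0.le
  have hw : ∀ z : ℝ, ν * z ^ 2 / (4 * (1 + t)) = a * z ^ 2 := by
    intro z; rw [ha]; ring
  simp only [hw] at hdecay hint1 hint2 hint3 ⊢
  have hcf : Continuous f := hf.continuous
  have hcf' : Continuous (deriv f) := hf.continuous_deriv le_rfl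
  have hderiv : ∀ x : ℝ, HasDerivAt f (deriv f x) x := fun x =>
    ((hf.differentiable one_ne_zero) x).hasDerivAt
  have hE : Continuous fun z : ℝ => Real.exp (a * z ^ 2) :=
    Real.continuous_exp.comp (continuous_const.mul (continuous_pow 2))
  -- derivative of the weight
  have hEderiv : ∀ x : ℝ, HasDerivAt (fun z => Real.exp (a * z ^ 2))
      (Real.exp (a * x ^ 2) * (a * (2 * x ^ 1))) x := fun x =>
    (((hasDerivAt_pow 2 x).const_mul a).exp)
  -- integrability of the mixed term
  have hmix : IntegrableOn (fun z => z * f z * deriv f z * Real.exp (a * z ^ 2)) (Ioi 0) := by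
    refine Integrable.mono' ((hint2.add hint3).const_mul (1/2 : ℝ))
      (((continuous_id.mul hcf).mul hcf').mul hE).aestronglyMeasurable ?_
    refine ae_of_all _ fun z => ?_
    have h1 : |z * f z * deriv f z| ≤ (1/2) * ((deriv f z) ^ 2 + z ^ 2 * f z ^ 2) := by
      rcases abs_cases (z * f z * deriv f z) with ⟨h, _⟩ | ⟨h, _⟩ <;> rw [h] <;>
        nlinarith [sq_nonneg (z * f z - deriv f z), sq_nonneg (z * f z + deriv f z)]
    have hEz : 0 ≤ Real.exp (a * z ^ 2) := (Real.exp_pos _).le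
    calc ‖z * f z * deriv f z * Real.exp (a * z ^ 2)‖
        = |z * f z * deriv f z| * Real.exp (a * z ^ 2) := by
          rw [Real.norm_eq_abs, abs_mul, abs_of_nonneg hEz]
      _ ≤ (1/2) * ((deriv f z) ^ 2 + z ^ 2 * f z ^ 2) * Real.exp (a * z ^ 2) :=
          mul_le_mul_of_nonneg_right h1 hEz
      _ = 1/2 * ((deriv f z) ^ 2 * Real.exp (a * z ^ 2)
            + z ^ 2 * f z ^ 2 * Real.exp (a * z ^ 2)) := by ring
  -- integration by parts identity
  set I1 := ∫ z in Ioi (0:ℝ), f z ^ 2 * Real.exp (a * z ^ 2) with hI1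
  set I2 := ∫ z in Ioi (0:ℝ), (deriv f z) ^ 2 * Real.exp (a * z ^ 2) with hI2
  set I3 := ∫ z in Ioi (0:ℝ), z ^ 2 * f z ^ 2 * Real.exp (a * z ^ 2) with hI3
  set M := ∫ z in Ioi (0:ℝ), z * f z * deriv f z * Real.exp (a * z ^ 2) with hM
  have hG : ∀ x : ℝ, HasDerivAt (fun z => z * f z ^ 2 * Real.exp (a * z ^ 2))
      (f x ^ 2 * Real.exp (a * x ^ 2) + 2 * (x * f x * deriv f x * Real.exp (a * x ^ 2))
        + 2 * a * (x ^ 2 * f x ^ 2 * Real.exp (a * x ^ 2))) x := by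
    intro x
    have := ((hasDerivAt_id x).mul ((hderiv x).pow 2)).mul (hEderiv x)
    refine this.congr_deriv ?_
    simp only [id_eq, Pi.pow_apply, Pi.mul_apply]
    ring
  have hGint : IntegrableOn (fun z => f z ^ 2 * Real.exp (a * z ^ 2)
      + 2 * (z * f z * deriv f z * Real.exp (a * z ^ 2))
      + 2 * a * (z ^ 2 * f z ^ 2 * Real.exp (a * z ^ 2))) (Ioi 0) :=
    (hint1.add (hmix.const_mul 2)).add (hint3.const_mul (2 * a))
  have hadd12 : IntegrableOn (fun z => f z ^ 2 * Real.exp (a * z ^ 2)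
      + 2 * (z * f z * deriv f z * Real.exp (a * z ^ 2))) (Ioi 0) :=
    hint1.add (hmix.const_mul 2)
  have hadd22 : IntegrableOn (fun z => (deriv f z) ^ 2 * Real.exp (a * z ^ 2)
      + 2 * a * (z * f z * deriv f z * Real.exp (a * z ^ 2))) (Ioi 0) :=
    hint2.add (hmix.const_mul (2 * a))
  have hibp : I1 + 2 * M + 2 * a * I3 = 0 := by
    have h0 : ∫ z in Ioi (0:ℝ), (f z ^ 2 * Real.exp (a * z ^ 2)
        + 2 * (z * f z * deriv f z * Real.exp (a * z ^ 2))
        + 2 * a * (z ^ 2 * f z ^ 2 * Real.exp (a * z ^ 2))) = 0 - (0 * f 0 ^ 2 * Real.exp (a * 0 ^ 2)) := by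
      refine integral_Ioi_of_hasDerivAt_of_tendsto ?_ (fun x _ => hG x) hGint hdecay
      exact (((continuous_id.mul (hcf.pow 2)).mul hE).continuousAt).continuousWithinAt
    rw [integral_add hadd12 (hint3.const_mul (2 * a)),
      integral_add hint1 (hmix.const_mul 2), integral_const_mul, integral_const_mul] at h0
    simpa using h0
  -- positivity of the completed square
  have hpos : 0 ≤ I2 + 2 * a * M + a ^ 2 * I3 := by
    have hsq : 0 ≤ ∫ z in Ioi (0:ℝ), ((deriv f z) ^ 2 * Real.exp (a * z ^ 2)
        + 2 * a * (z * f z * deriv f z * Real.exp (a * z ^ 2))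
        + a ^ 2 * (z ^ 2 * f z ^ 2 * Real.exp (a * z ^ 2))) := by
      refine setIntegral_nonneg measurableSet_Ioi fun z _ => ?_
      have : (deriv f z) ^ 2 * Real.exp (a * z ^ 2)
          + 2 * a * (z * f z * deriv f z * Real.exp (a * z ^ 2))
          + a ^ 2 * (z ^ 2 * f z ^ 2 * Real.exp (a * z ^ 2))
          = (deriv f z + a * z * f z) ^ 2 * Real.exp (a * z ^ 2) := by ring
      rw [this]
      exact mul_nonneg (sq_nonneg _) (Real.exp_pos _).le
    rwa [integral_add hadd22 (hint3.const_mul (a ^ 2)),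
      integral_add hint2 (hmix.const_mul (2 * a)), integral_const_mul, integral_const_mul] at hsq
  have hMval : M = -(I1/2) - a * I3 := by linarith
  rw [hMval] at hpos
  have hring : I2 + 2 * a * (-(I1/2) - a * I3) + a ^ 2 * I3 = I2 - a * I1 - a ^ 2 * I3 := by ring
  linarith [hpos, hring]
end

section
/- For all ζ ≥ 0, e^{-ζ²} ∫₀^ζ e^{s²} ds ≤ 2/(1+ζ). -/
open Real

lemma exp_sq_intble (a b : ℝ) :
    IntervalIntegrable (fun s : ℝ => Real.exp (s ^ 2)) MeasureTheory.volume a b :=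
  (Real.continuous_exp.comp (continuous_pow 2)).intervalIntegrable a b

lemma deriv_aux (s : ℝ) (hs : s ≠ 0) :
    HasDerivAt (fun t : ℝ => Real.exp (t ^ 2) / t)
      ((2 * s * Real.exp (s ^ 2) * s - Real.exp (s ^ 2) * 1) / s ^ 2) s := by
  have h1 : HasDerivAt (fun t : ℝ => t ^ 2) (2 * s) s := by
    simpa using hasDerivAt_pow 2 s
  have h2 : HasDerivAt (fun t : ℝ => Real.exp (t ^ 2)) (2 * s * Real.exp (s ^ 2)) s := by
    simpa [mul_comm] using h1.exp
  exact h2.div (hasDerivAt_id s) hs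

lemma mid_bound (ζ : ℝ) (hζ : 1 ≤ ζ) :
    (∫ s in (1:ℝ)..ζ, Real.exp (s ^ 2)) ≤ Real.exp (ζ ^ 2) / ζ - Real.exp 1 := by
  have hζ0 : (0:ℝ) < ζ := lt_of_lt_of_le one_pos hζ
  set g : ℝ → ℝ := fun s => (2 * s * Real.exp (s ^ 2) * s - Real.exp (s ^ 2) * 1) / s ^ 2
  have hgc : ContinuousOn g (Set.uIcc (1:ℝ) ζ) := by
    apply ContinuousOn.div
    · fun_prop
    · fun_prop
    · intro x hx
      rw [Set.uIcc_of_le hζ] at hx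
      have : (1:ℝ) ≤ x := hx.1
      positivity
  have hgint : IntervalIntegrable g MeasureTheory.volume 1 ζ :=
    hgc.intervalIntegrable
  have hftc : (∫ s in (1:ℝ)..ζ, g s)
      = Real.exp (ζ ^ 2) / ζ - Real.exp (1 ^ 2) / 1 := by
    apply intervalIntegral.integral_eq_sub_of_hasDerivAt
    · intro x hx
      rw [Set.uIcc_of_le hζ] at hx
      exact deriv_aux x (by nlinarith [hx.1])
    · exact hgint
  have hmono : (∫ s in (1:ℝ)..ζ, Real.exp (s ^ 2)) ≤ ∫ s in (1:ℝ)..ζ, g s := by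
    apply intervalIntegral.integral_mono_on hζ (exp_sq_intble 1 ζ) hgint
    intro x hx
    have hx1 : (1:ℝ) ≤ x := hx.1
    have hx0 : (0:ℝ) < x := lt_of_lt_of_le one_pos hx1
    have hpos : 0 < Real.exp (x ^ 2) := Real.exp_pos _
    simp only [g]
    rw [le_div_iff₀ (by positivity)]
    nlinarith [mul_nonneg hpos.le (by nlinarith : (0:ℝ) ≤ x ^ 2 - 1)]
  calc (∫ s in (1:ℝ)..ζ, Real.exp (s ^ 2)) ≤ ∫ s in (1:ℝ)..ζ, g s := hmono
    _ = Real.exp (ζ ^ 2) / ζ - Real.exp (1 ^ 2) / 1 := hftc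
    _ = Real.exp (ζ ^ 2) / ζ - Real.exp 1 := by norm_num

/-- Dawson-type integral bound: `e^{-ζ²} ∫₀^ζ e^{s²} ds ≤ 2/(1+ζ)` for `ζ ≥ 0`. -/
theorem dawson_integral_bound (ζ : ℝ) (hζ : 0 ≤ ζ) :
    Real.exp (-ζ ^ 2) * ∫ s in (0:ℝ)..ζ, Real.exp (s ^ 2) ≤ 2 / (1 + ζ) := by
  have h1ζ : (0:ℝ) < 1 + ζ := by linarith
  rcases le_or_gt ζ 1 with hle | hgt
  · -- case ζ ≤ 1 : integral ≤ ζ e^{ζ²}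
    have hbound : (∫ s in (0:ℝ)..ζ, Real.exp (s ^ 2)) ≤ ζ * Real.exp (ζ ^ 2) := by
      have : (∫ s in (0:ℝ)..ζ, Real.exp (s ^ 2))
          ≤ ∫ s in (0:ℝ)..ζ, Real.exp (ζ ^ 2) := by
        apply intervalIntegral.integral_mono_on hζ (exp_sq_intble 0 ζ)
          (intervalIntegrable_const)
        intro x hx
        exact Real.exp_le_exp.2 (by nlinarith [hx.1, hx.2])
      simpa [mul_comm] using this
    have : Real.exp (-ζ ^ 2) * ∫ s in (0:ℝ)..ζ, Real.exp (s ^ 2) ≤ ζ := by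
      calc Real.exp (-ζ ^ 2) * ∫ s in (0:ℝ)..ζ, Real.exp (s ^ 2)
          ≤ Real.exp (-ζ ^ 2) * (ζ * Real.exp (ζ ^ 2)) := by
            exact mul_le_mul_of_nonneg_left hbound (Real.exp_pos _).le
        _ = ζ := by
            rw [Real.exp_neg]; field_simp
    refine this.trans ?_
    rw [le_div_iff₀ h1ζ]
    nlinarith
  · -- case ζ > 1
    have hζ0 : (0:ℝ) < ζ := lt_trans one_pos hgt
    have hsplit : (∫ s in (0:ℝ)..ζ, Real.exp (s ^ 2))
        = (∫ s in (0:ℝ)..1, Real.exp (s ^ 2)) + ∫ s in (1:ℝ)..ζ, Real.exp (s ^ 2) :=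
      (intervalIntegral.integral_add_adjacent_intervals (exp_sq_intble 0 1)
        (exp_sq_intble 1 ζ)).symm
    have h01 : (∫ s in (0:ℝ)..1, Real.exp (s ^ 2)) ≤ Real.exp 1 := by
      have : (∫ s in (0:ℝ)..1, Real.exp (s ^ 2)) ≤ ∫ s in (0:ℝ)..1, Real.exp 1 := by
        apply intervalIntegral.integral_mono_on zero_le_one (exp_sq_intble 0 1)
          (intervalIntegrable_const)
        intro x hx
        exact Real.exp_le_exp.2 (by nlinarith [hx.1, hx.2])
      simpa using this
    have hmid := mid_bound ζ hgt.le
    have htot : (∫ s in (0:ℝ)..ζ, Real.exp (s ^ 2)) ≤ Real.exp (ζ ^ 2) / ζ := by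
      rw [hsplit]; linarith
    have hfin : Real.exp (-ζ ^ 2) * ∫ s in (0:ℝ)..ζ, Real.exp (s ^ 2) ≤ 1 / ζ := by
      calc Real.exp (-ζ ^ 2) * ∫ s in (0:ℝ)..ζ, Real.exp (s ^ 2)
          ≤ Real.exp (-ζ ^ 2) * (Real.exp (ζ ^ 2) / ζ) :=
            mul_le_mul_of_nonneg_left htot (Real.exp_pos _).le
        _ = 1 / ζ := by
            rw [Real.exp_neg]; field_simp
    refine hfin.trans ?_
    rw [div_le_div_iff₀ hζ0 h1ζ]
    nlinarith
end

section
/- Let t ≥ 0, ⟨t⟩ = 1+t, and 0 ≤ ν < 1. Let g ∈ L²(0,∞) and define u(z) := e^{−z²/(4⟨t⟩)} ∫₀^z g(s) e^{s²/(4⟨t⟩)} ds. Then with θ_μ(z) := e^{μ z²/(8⟨t⟩)}, one has the pointwise bound |θ_ν(z) u(z)| ≤ C_ν θ_{ν−1}(z) ⟨t⟩^{1/4} ‖θ₁ g‖_{L²(0,∞)} for all z ≥ 0, where C_ν depends only on ν. -/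
open Real MeasureTheory Set

private lemma exp_int_bound {T : ℝ} (hT : 0 < T) {z : ℝ} (hz : 0 ≤ z) :
    ∫ s in Ioc (0:ℝ) z, Real.exp (s ^ 2 / (4 * T)) ≤
      2 * Real.sqrt T * Real.exp (z ^ 2 / (4 * T)) := by
  have hT4 : (0:ℝ) < 4 * T := by linarith
  have hst : 0 < Real.sqrt T := Real.sqrt_pos.2 hT
  have hcont : Continuous fun s : ℝ => Real.exp (s ^ 2 / (4 * T)) := by
    continuity
  have hint : IntegrableOn (fun s : ℝ => Real.exp (s ^ 2 / (4 * T))) (Ioc 0 z) :=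
    hcont.integrableOn_Ioc
  rcases le_or_gt z (2 * Real.sqrt T) with hzT | hzT
  · calc ∫ s in Ioc (0:ℝ) z, Real.exp (s ^ 2 / (4 * T))
        ≤ ∫ _ in Ioc (0:ℝ) z, Real.exp (z ^ 2 / (4 * T)) := by
          refine setIntegral_mono_on hint (integrableOn_const ?_)
            measurableSet_Ioc ?_
          · rw [Real.volume_Ioc]; exact ENNReal.ofReal_lt_top.ne
          · intro s hs
            have hs2 : s ^ 2 ≤ z ^ 2 := by nlinarith [hs.1, hs.2]
            exact Real.exp_le_exp.2 (by gcongr)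
      _ = z * Real.exp (z ^ 2 / (4 * T)) := by
          simp [Real.volume_Ioc, hz, max_eq_left hz]
      _ ≤ 2 * Real.sqrt T * Real.exp (z ^ 2 / (4 * T)) :=
          mul_le_mul_of_nonneg_right hzT (Real.exp_pos _).le
  · have hz0 : 0 < z := lt_trans (by positivity) hzT
    set c : ℝ := z / (4 * T) with hc
    have hc0 : 0 < c := div_pos hz0 hT4
    have hpt : ∀ s ∈ Ioc (0:ℝ) z, Real.exp (s ^ 2 / (4 * T)) ≤
        Real.exp (z ^ 2 / (4 * T)) * Real.exp (c * s - c * z) := by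
      intro s hs
      rw [← Real.exp_add, Real.exp_le_exp]
      calc s ^ 2 / (4 * T) ≤ (z ^ 2 + z * (s - z)) / (4 * T) := by
            gcongr
            nlinarith [hs.1.le, hs.2]
        _ = z ^ 2 / (4 * T) + (c * s - c * z) := by rw [hc]; ring
    have hcont2 : Continuous fun s : ℝ => Real.exp (z ^ 2 / (4 * T)) *
        Real.exp (c * s - c * z) := by continuity
    have step1 : ∫ s in Ioc (0:ℝ) z, Real.exp (s ^ 2 / (4 * T)) ≤
        ∫ s in Ioc (0:ℝ) z, Real.exp (z ^ 2 / (4 * T)) * Real.exp (c * s - c * z) :=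
      setIntegral_mono_on hint hcont2.integrableOn_Ioc measurableSet_Ioc hpt
    have hJ : ∫ s in Ioc (0:ℝ) z, Real.exp (c * s - c * z) ≤ c⁻¹ := by
      have heq : ∫ s in Ioc (0:ℝ) z, Real.exp (c * s - c * z)
          = (∫ s in (0:ℝ)..z, Real.exp (c * s)) / Real.exp (c * z) := by
        rw [← intervalIntegral.integral_of_le hz, ← intervalIntegral.integral_div]
        congr 1; ext s; rw [Real.exp_sub]
      have heval : ∫ s in (0:ℝ)..z, Real.exp (c * s)
          = c⁻¹ * (Real.exp (c * z) - 1) := by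
        rw [intervalIntegral.integral_comp_mul_left (fun x => Real.exp x) hc0.ne']
        rw [integral_exp]
        simp [smul_eq_mul]
      rw [heq, heval]
      have hE : (1:ℝ) ≤ Real.exp (c * z) := Real.one_le_exp (by positivity)
      rw [div_le_iff₀ (by positivity)]
      have : c⁻¹ * (Real.exp (c * z) - 1) ≤ c⁻¹ * Real.exp (c * z) :=
        mul_le_mul_of_nonneg_left (by linarith) (by positivity)
      linarith
    have hcinv : c⁻¹ ≤ 2 * Real.sqrt T := by
      rw [hc, inv_div, div_le_iff₀ hz0]
      have hTs : Real.sqrt T * Real.sqrt T = T := Real.mul_self_sqrt hT.le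
      nlinarith [hzT, hst]
    calc ∫ s in Ioc (0:ℝ) z, Real.exp (s ^ 2 / (4 * T))
        ≤ ∫ s in Ioc (0:ℝ) z, Real.exp (z ^ 2 / (4 * T)) * Real.exp (c * s - c * z) := step1
      _ = Real.exp (z ^ 2 / (4 * T)) * ∫ s in Ioc (0:ℝ) z, Real.exp (c * s - c * z) := by
          rw [integral_const_mul]
      _ ≤ Real.exp (z ^ 2 / (4 * T)) * c⁻¹ :=
          mul_le_mul_of_nonneg_left hJ (Real.exp_pos _).le
      _ ≤ Real.exp (z ^ 2 / (4 * T)) * (2 * Real.sqrt T) :=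
          mul_le_mul_of_nonneg_left hcinv (Real.exp_pos _).le
      _ = 2 * Real.sqrt T * Real.exp (z ^ 2 / (4 * T)) := by ring

/-- Pointwise weighted bound for `u(z) = e^{−z²/(4⟨t⟩)} ∫₀^z g(s) e^{s²/(4⟨t⟩)} ds`:
`|θ_ν u| ≤ C_ν θ_{ν−1} ⟨t⟩^{1/4} ‖θ₁ g‖_{L²(0,∞)}`, with `θ_μ(z) = e^{μ z²/(8⟨t⟩)}`. -/
theorem pointwise_weighted_bound (ν : ℝ) (hν0 : 0 ≤ ν) (hν1 : ν < 1) :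
    ∃ C : ℝ, 0 < C ∧ ∀ t : ℝ, 0 ≤ t → ∀ g : ℝ → ℝ,
      IntegrableOn (fun s => (Real.exp (s ^ 2 / (8 * (1 + t))) * g s) ^ 2) (Ioi 0) →
      ∀ z : ℝ, 0 ≤ z →
        |Real.exp (ν * z ^ 2 / (8 * (1 + t))) *
            (Real.exp (-z ^ 2 / (4 * (1 + t))) *
              ∫ s in (0:ℝ)..z, g s * Real.exp (s ^ 2 / (4 * (1 + t))))|
          ≤ C * Real.exp ((ν - 1) * z ^ 2 / (8 * (1 + t))) * (1 + t) ^ ((1:ℝ)/4) *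
              Real.sqrt (∫ s in Ioi (0:ℝ),
                (Real.exp (s ^ 2 / (8 * (1 + t))) * g s) ^ 2) := by
  refine ⟨2, by norm_num, ?_⟩
  intro t ht g hg z hz
  set T : ℝ := 1 + t with hTdef
  have hT0 : (0:ℝ) < T := by simp only [hTdef]; linarith
  have hTne : (1 + t) ≠ 0 := by linarith
  set S : ℝ := ∫ s in Ioi (0:ℝ), (Real.exp (s ^ 2 / (8 * T)) * g s) ^ 2 with hSdef
  have hS0 : 0 ≤ S := by
    apply setIntegral_nonneg measurableSet_Ioi
    intro s _; positivity
  set I : ℝ := ∫ s in (0:ℝ)..z, g s * Real.exp (s ^ 2 / (4 * T)) with hIdef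
  have key : |I| ≤ 2 * Real.exp (z ^ 2 / (8 * T)) * T ^ ((1:ℝ)/4) * Real.sqrt S := by
    by_cases hii : IntervalIntegrable (fun s => g s * Real.exp (s ^ 2 / (4 * T)))
        volume 0 z
    · -- Cauchy–Schwarz
      have hio : IntegrableOn (fun s => g s * Real.exp (s ^ 2 / (4 * T))) (Ioc 0 z) :=
        (intervalIntegrable_iff_integrableOn_Ioc_of_le hz).1 hii
      set h₁ : ℝ → ℝ := fun s => Real.exp (s ^ 2 / (8 * T)) * g s with hh1
      set k : ℝ → ℝ := fun s => Real.exp (s ^ 2 / (8 * T)) with hk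
      have hkcont : Continuous k := by rw [hk]; continuity
      have hprod : ∀ s, g s * Real.exp (s ^ 2 / (4 * T)) = h₁ s * k s := by
        intro s
        rw [hh1, hk]
        simp only
        rw [mul_comm (Real.exp _) (g s), mul_assoc, ← Real.exp_add]
        congr 2
        field_simp
        ring
      have hh1m : AEStronglyMeasurable h₁ (volume.restrict (Ioc 0 z)) := by
        have hm : AEStronglyMeasurable
            (fun s => (g s * Real.exp (s ^ 2 / (4 * T))) * Real.exp (-(s ^ 2) / (8 * T)))
            (volume.restrict (Ioc 0 z)) := by
          apply hio.aestronglyMeasurable.mul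
          exact (by continuity : Continuous fun s : ℝ =>
            Real.exp (-(s ^ 2) / (8 * T))).aestronglyMeasurable
        apply hm.congr
        filter_upwards with s
        rw [hh1]
        simp only
        rw [mul_comm (Real.exp _) (g s), mul_assoc, ← Real.exp_add]
        congr 2
        field_simp
        ring
      have hh1sq : Integrable (fun s => h₁ s ^ 2) (volume.restrict (Ioc 0 z)) :=
        hg.mono_set (Ioc_subset_Ioi_self : Ioc (0:ℝ) z ⊆ Ioi 0)
      have hh1L2 : MemLp h₁ (ENNReal.ofReal 2) (volume.restrict (Ioc 0 z)) := by
        rw [(by norm_num : ENNReal.ofReal 2 = 2)]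
        exact (memLp_two_iff_integrable_sq hh1m).2 hh1sq
      have hksq : Integrable (fun s => k s ^ 2) (volume.restrict (Ioc 0 z)) := by
        have : Continuous fun s : ℝ => k s ^ 2 := by rw [hk]; continuity
        exact this.integrableOn_Ioc
      have hkL2 : MemLp k (ENNReal.ofReal 2) (volume.restrict (Ioc 0 z)) := by
        rw [(by norm_num : ENNReal.ofReal 2 = 2)]
        exact (memLp_two_iff_integrable_sq hkcont.aestronglyMeasurable).2 hksq
      have hpq : Real.HolderConjugate 2 2 := ⟨by norm_num, by norm_num, by norm_num⟩
      have CS := integral_mul_norm_le_Lp_mul_Lq (μ := volume.restrict (Ioc 0 z))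
        hpq hh1L2 hkL2
      have hnorm_eq : ∀ x : ℝ, ‖x‖ ^ (2:ℝ) = x ^ 2 := fun x => by
        rw [show (2:ℝ) = ((2:ℕ):ℝ) by norm_num, Real.rpow_natCast, Real.norm_eq_abs, sq_abs]
      have habs : |I| ≤ ∫ s in Ioc (0:ℝ) z, ‖h₁ s‖ * ‖k s‖ := by
        rw [hIdef, intervalIntegral.integral_of_le hz, ← Real.norm_eq_abs]
        refine le_trans (norm_integral_le_integral_norm _) (le_of_eq ?_)
        apply setIntegral_congr_fun measurableSet_Ioc
        intro s _
        simp only [Real.norm_eq_abs]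
        rw [hprod s, abs_mul]
      have e1 : (∫ s in Ioc (0:ℝ) z, ‖h₁ s‖ ^ (2:ℝ)) = ∫ s in Ioc (0:ℝ) z, h₁ s ^ 2 := by
        simp_rw [hnorm_eq]
      have e2 : (∫ s in Ioc (0:ℝ) z, ‖k s‖ ^ (2:ℝ))
          = ∫ s in Ioc (0:ℝ) z, Real.exp (s ^ 2 / (4 * T)) := by
        apply setIntegral_congr_fun measurableSet_Ioc
        intro s _
        simp only [hk, hnorm_eq]
        rw [sq, ← Real.exp_add]
        congr 1
        field_simp
        ring
      have i1 : 0 ≤ ∫ s in Ioc (0:ℝ) z, h₁ s ^ 2 :=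
        setIntegral_nonneg measurableSet_Ioc (fun s _ => by positivity)
      have i2 : 0 ≤ ∫ s in Ioc (0:ℝ) z, Real.exp (s ^ 2 / (4 * T)) :=
        setIntegral_nonneg measurableSet_Ioc (fun s _ => (Real.exp_pos _).le)
      have b1 : ∫ s in Ioc (0:ℝ) z, h₁ s ^ 2 ≤ S := by
        rw [hSdef]
        apply setIntegral_mono_set hg
        · filter_upwards with s; positivity
        · exact HasSubset.Subset.eventuallyLE Ioc_subset_Ioi_self
      have b1' : (∫ s in Ioc (0:ℝ) z, h₁ s ^ 2) ^ ((1:ℝ)/2) ≤ Real.sqrt S := by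
        rw [Real.sqrt_eq_rpow]
        exact Real.rpow_le_rpow i1 b1 (by norm_num)
      have b2' : (∫ s in Ioc (0:ℝ) z, Real.exp (s ^ 2 / (4 * T))) ^ ((1:ℝ)/2)
          ≤ Real.sqrt 2 * (T ^ ((1:ℝ)/4) * Real.exp (z ^ 2 / (8 * T))) := by
        have hb := exp_int_bound hT0 hz
        have h2 : (∫ s in Ioc (0:ℝ) z, Real.exp (s ^ 2 / (4 * T))) ^ ((1:ℝ)/2)
            ≤ (2 * Real.sqrt T * Real.exp (z ^ 2 / (4 * T))) ^ ((1:ℝ)/2) :=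
          Real.rpow_le_rpow i2 hb (by norm_num)
        refine le_trans h2 (le_of_eq ?_)
        rw [← Real.sqrt_eq_rpow]
        rw [show (2:ℝ) * Real.sqrt T * Real.exp (z ^ 2 / (4 * T))
            = 2 * (Real.sqrt T * Real.exp (z ^ 2 / (4 * T))) from by ring]
        rw [Real.sqrt_mul (by norm_num : (0:ℝ) ≤ 2), Real.sqrt_mul (Real.sqrt_nonneg T)]
        congr 1
        congr 1
        · rw [Real.sqrt_eq_rpow, Real.sqrt_eq_rpow, ← Real.rpow_mul hT0.le]
          norm_num
        · rw [show z ^ 2 / (4 * T) = z ^ 2 / (8 * T) + z ^ 2 / (8 * T) from by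
            field_simp; ring, Real.exp_add, ← pow_two]
          exact Real.sqrt_sq (Real.exp_pos _).le
      have sqrt2le : Real.sqrt 2 ≤ 2 := by
        nlinarith [Real.sq_sqrt (by norm_num : (0:ℝ) ≤ 2), Real.sqrt_nonneg 2]
      calc |I| ≤ ∫ s in Ioc (0:ℝ) z, ‖h₁ s‖ * ‖k s‖ := habs
        _ ≤ (∫ s in Ioc (0:ℝ) z, ‖h₁ s‖ ^ (2:ℝ)) ^ ((1:ℝ)/2) *
            (∫ s in Ioc (0:ℝ) z, ‖k s‖ ^ (2:ℝ)) ^ ((1:ℝ)/2) := CS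
        _ = (∫ s in Ioc (0:ℝ) z, h₁ s ^ 2) ^ ((1:ℝ)/2) *
            (∫ s in Ioc (0:ℝ) z, Real.exp (s ^ 2 / (4 * T))) ^ ((1:ℝ)/2) := by rw [e1, e2]
        _ ≤ Real.sqrt S * (Real.sqrt 2 * (T ^ ((1:ℝ)/4) * Real.exp (z ^ 2 / (8 * T)))) := by
            apply mul_le_mul b1' b2' (Real.rpow_nonneg i2 _) (Real.sqrt_nonneg _)
        _ ≤ Real.sqrt S * (2 * (T ^ ((1:ℝ)/4) * Real.exp (z ^ 2 / (8 * T)))) := by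
            apply mul_le_mul_of_nonneg_left _ (Real.sqrt_nonneg _)
            apply mul_le_mul_of_nonneg_right sqrt2le (by positivity)
        _ = 2 * Real.exp (z ^ 2 / (8 * T)) * T ^ ((1:ℝ)/4) * Real.sqrt S := by ring
    · rw [hIdef, intervalIntegral.integral_undef hii]
      simp only [abs_zero]
      positivity
  have hA : |Real.exp (ν * z ^ 2 / (8 * T)) * (Real.exp (-z ^ 2 / (4 * T)) * I)|
      = Real.exp ((ν - 2) * z ^ 2 / (8 * T)) * |I| := by
    have h48 : (-z ^ 2) / (4 * T) = (-2 * z ^ 2) / (8 * T) := by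
      rw [div_eq_div_iff (by linarith : (4:ℝ) * T ≠ 0) (by linarith : (8:ℝ) * T ≠ 0)]
      ring
    rw [abs_mul, abs_mul, Real.abs_exp, Real.abs_exp, ← mul_assoc, ← Real.exp_add]
    congr 2
    rw [show -z ^ 2 / (4 * T) = (-2 * z ^ 2) / (8 * T) from h48, ← add_div]
    congr 1
    ring
  have hB : Real.exp ((ν - 1) * z ^ 2 / (8 * T))
      = Real.exp ((ν - 2) * z ^ 2 / (8 * T)) * Real.exp (z ^ 2 / (8 * T)) := by
    rw [← Real.exp_add, ← add_div]; congr 1; ring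
  rw [hA, hB]
  calc Real.exp ((ν - 2) * z ^ 2 / (8 * T)) * |I|
      ≤ Real.exp ((ν - 2) * z ^ 2 / (8 * T)) *
        (2 * Real.exp (z ^ 2 / (8 * T)) * T ^ ((1:ℝ)/4) * Real.sqrt S) :=
        mul_le_mul_of_nonneg_left key (Real.exp_pos _).le
    _ = 2 * (Real.exp ((ν - 2) * z ^ 2 / (8 * T)) * Real.exp (z ^ 2 / (8 * T))) *
        T ^ ((1:ℝ)/4) * Real.sqrt S := by ring
end

section
/- Let t ≥ 0, ⟨t⟩ = 1+t, 0 ≤ ν < 1, and let f : [0,∞) → ℝ be C¹ with f(z) → 0 as z → ∞ and θ_{(ν+1)/2} f' ∈ L²(0,∞). Then for all z ≥ 0, |θ_ν(z) f(z)| ≤ C_ν ⟨t⟩^{1/4} ‖θ_{(ν+1)/2} f'‖_{L²(0,∞)}, where θ_μ(z) = e^{μ z²/(8⟨t⟩)} and C_ν depends only on ν. -/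
open Real MeasureTheory Set Filter

/-- Weighted sup-norm control of `f` by the weighted `L²` norm of `f'`:
`|θ_ν f(z)| ≤ C_ν ⟨t⟩^{1/4} ‖θ_{(ν+1)/2} f'‖_{L²(0,∞)}` with `θ_μ(z) = e^{μ z²/(8⟨t⟩)}`. -/
theorem weighted_sup_bound_by_deriv (ν : ℝ) (hν0 : 0 ≤ ν) (hν1 : ν < 1) :
    ∃ C : ℝ, 0 < C ∧ ∀ t : ℝ, 0 ≤ t → ∀ f : ℝ → ℝ, ContDiff ℝ 1 f →
      Tendsto f atTop (nhds 0) →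
      IntegrableOn
        (fun s => (Real.exp ((ν + 1) / 2 * s ^ 2 / (8 * (1 + t))) * deriv f s) ^ 2) (Ioi 0) →
      ∀ z : ℝ, 0 ≤ z →
        |Real.exp (ν * z ^ 2 / (8 * (1 + t))) * f z|
          ≤ C * (1 + t) ^ ((1:ℝ)/4) *
              Real.sqrt (∫ s in Ioi (0:ℝ),
                (Real.exp ((ν + 1) / 2 * s ^ 2 / (8 * (1 + t))) * deriv f s) ^ 2) := by
  have hν1' : (0:ℝ) < 1 - ν := by linarith
  refine ⟨Real.sqrt (Real.sqrt (8 * π / (1 - ν)) / 2) + 1, by positivity, ?_⟩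
  intro t ht f hfC hftop hL2 z hz
  set C : ℝ := Real.sqrt (Real.sqrt (8 * π / (1 - ν)) / 2) + 1 with hC
  set T : ℝ := 1 + t with hTdef
  have hT : (0:ℝ) < T := by rw [hTdef]; linarith
  set g : ℝ → ℝ := fun s => Real.exp ((ν + 1) / 2 * s ^ 2 / (8 * T)) * deriv f s with hg
  set w : ℝ → ℝ := fun s => Real.exp ((ν - 1) / 2 * s ^ 2 / (8 * T)) with hw
  show |Real.exp (ν * z ^ 2 / (8 * T)) * f z|
      ≤ C * T ^ ((1:ℝ)/4) * Real.sqrt (∫ s in Ioi (0:ℝ), g s ^ 2)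
  have hfd : Continuous (deriv f) := hfC.continuous_deriv le_rfl
  have hgc : Continuous g := by
    rw [hg]; exact (Real.continuous_exp.comp (by continuity)).mul hfd
  have hwc : Continuous w := by
    rw [hw]; exact Real.continuous_exp.comp (by continuity)
  have hg2 : IntegrableOn (fun s => g s ^ 2) (Ioi 0) := hL2
  have hgL2 : MemLp g 2 (volume.restrict (Ioi 0)) :=
    (memLp_two_iff_integrable_sq hgc.aestronglyMeasurable).2 hg2
  have hb : (0:ℝ) < (1 - ν) / (8 * T) := by positivity
  have hw2eq : (fun s : ℝ => w s ^ 2) = fun s => Real.exp (-((1 - ν) / (8 * T)) * s ^ 2) := by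
    funext s
    rw [hw, sq, ← Real.exp_add]
    congr 1
    field_simp
    ring
  have hw2int : IntegrableOn (fun s => w s ^ 2) (Ioi 0) := by
    rw [hw2eq]; exact (integrable_exp_neg_mul_sq hb).integrableOn
  have hwL2 : MemLp w 2 (volume.restrict (Ioi 0)) :=
    (memLp_two_iff_integrable_sq hwc.aestronglyMeasurable).2 hw2int
  -- value of the Gaussian integral
  have hwval : ∫ s in Ioi (0:ℝ), w s ^ 2 = Real.sqrt (8 * π / (1 - ν)) / 2 * Real.sqrt T := by
    rw [hw2eq, integral_gaussian_Ioi]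
    have h1 : π / ((1 - ν) / (8 * T)) = 8 * π / (1 - ν) * T := by
      field_simp
    rw [h1, Real.sqrt_mul (by positivity)]
    ring
  -- pointwise identity
  have hkey : ∀ s : ℝ, w s * |g s| = Real.exp (ν * s ^ 2 / (8 * T)) * |deriv f s| := by
    intro s
    rw [hg, hw]
    simp only
    rw [abs_mul, abs_of_pos (Real.exp_pos _), ← mul_assoc, ← Real.exp_add]
    rw [show (ν - 1) / 2 * s ^ 2 / (8 * T) + (ν + 1) / 2 * s ^ 2 / (8 * T)
        = ν * s ^ 2 / (8 * T) by ring]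
  -- integrability of w * |g|
  have hwgmem : IntegrableOn (fun s => w s * |g s|) (Ioi 0) := by
    have h1 : MemLp (fun s => |g s|) 2 (volume.restrict (Ioi 0)) := by
      simpa [Real.norm_eq_abs] using hgL2.norm
    have h2 : MemLp (w • fun s : ℝ => |g s|) 1 (volume.restrict (Ioi 0)) :=
      h1.smul hwL2 (hpqr := ⟨by simp [ENNReal.inv_two_add_inv_two]⟩)
    have h3 := memLp_one_iff_integrable.1 h2
    exact h3
  -- integrability of deriv f
  have hf'int : IntegrableOn (deriv f) (Ioi 0) := by
    refine hwgmem.mono' hfd.aestronglyMeasurable ?_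
    filter_upwards [ae_restrict_mem measurableSet_Ioi] with s hs
    rw [Real.norm_eq_abs, hkey s]
    nth_rewrite 1 [← one_mul |deriv f s|]
    exact mul_le_mul_of_nonneg_right (Real.one_le_exp (by positivity)) (abs_nonneg _)
  -- FTC
  have hFTC : ∫ s in Ioi z, deriv f s = 0 - f z :=
    integral_Ioi_of_hasDerivAt_of_tendsto'
      (fun x _ => (hfC.differentiable one_ne_zero x).hasDerivAt)
      (hf'int.mono_set (Ioi_subset_Ioi hz)) hftop
  -- step 1
  have step1 : |Real.exp (ν * z ^ 2 / (8 * T)) * f z|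
      ≤ ∫ s in Ioi z, Real.exp (ν * z ^ 2 / (8 * T)) * |deriv f s| := by
    rw [abs_mul, abs_of_pos (Real.exp_pos _), integral_const_mul]
    refine mul_le_mul_of_nonneg_left ?_ (Real.exp_pos _).le
    have habs : |f z| = |∫ s in Ioi z, deriv f s| := by
      rw [hFTC, zero_sub, abs_neg]
    rw [habs]
    simpa [Real.norm_eq_abs] using
      norm_integral_le_integral_norm (μ := volume.restrict (Ioi z)) (deriv f)
  -- step 2
  have step2 : ∫ s in Ioi z, Real.exp (ν * z ^ 2 / (8 * T)) * |deriv f s|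
      ≤ ∫ s in Ioi z, w s * |g s| := by
    refine setIntegral_mono_on
      (((hf'int.mono_set (Ioi_subset_Ioi hz)).abs).const_mul _)
      (hwgmem.mono_set (Ioi_subset_Ioi hz)) measurableSet_Ioi ?_
    intro s hs
    rw [hkey s]
    refine mul_le_mul_of_nonneg_right (Real.exp_le_exp.2 ?_) (abs_nonneg _)
    have hzs : z ≤ s := le_of_lt hs
    have hsq : z ^ 2 ≤ s ^ 2 := by nlinarith
    apply div_le_div_of_nonneg_right ?_ (by positivity)
    · exact mul_le_mul_of_nonneg_left hsq hν0
  -- Cauchy-Schwarz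
  have hpq : Real.HolderConjugate 2 2 := Real.HolderConjugate.two_two
  have h2e : ENNReal.ofReal (2:ℝ) = 2 := by simp
  have hrpow2 : ∀ x : ℝ, x ^ (2:ℝ) = x ^ 2 := fun x => by
    rw [show (2:ℝ) = ((2:ℕ):ℝ) by norm_num, Real.rpow_natCast]
  have hCS : ∫ s in Ioi z, w s * |g s|
      ≤ Real.sqrt (∫ s in Ioi z, w s ^ 2) * Real.sqrt (∫ s in Ioi z, g s ^ 2) := by
    have h := integral_mul_le_Lp_mul_Lq_of_nonneg hpq
      (f := w) (g := fun s => |g s|) (μ := volume.restrict (Ioi z))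
      (Eventually.of_forall fun s => by rw [hw]; exact (Real.exp_pos _).le)
      (Eventually.of_forall fun s => abs_nonneg _)
      (by rw [h2e]; exact hwL2.mono_measure (Measure.restrict_mono (Ioi_subset_Ioi hz) le_rfl))
      (by
        rw [h2e]
        have h1 : MemLp (fun s => |g s|) 2 (volume.restrict (Ioi 0)) := by
          simpa [Real.norm_eq_abs] using hgL2.norm
        exact h1.mono_measure (Measure.restrict_mono (Ioi_subset_Ioi hz) le_rfl))
    simp only [hrpow2, sq_abs] at h
    calc ∫ s in Ioi z, w s * |g s|
        ≤ (∫ s in Ioi z, w s ^ 2) ^ ((1:ℝ)/2) * (∫ s in Ioi z, g s ^ 2) ^ ((1:ℝ)/2) := h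
      _ = Real.sqrt (∫ s in Ioi z, w s ^ 2) * Real.sqrt (∫ s in Ioi z, g s ^ 2) := by
          rw [Real.sqrt_eq_rpow, Real.sqrt_eq_rpow]
  -- monotonicity in the domain
  have hsub : Ioi z ⊆ Ioi 0 := Ioi_subset_Ioi hz
  have hwmono : ∫ s in Ioi z, w s ^ 2 ≤ ∫ s in Ioi 0, w s ^ 2 :=
    setIntegral_mono_set hw2int (Eventually.of_forall fun s => sq_nonneg _)
      (HasSubset.Subset.eventuallyLE hsub)
  have hgmono : ∫ s in Ioi z, g s ^ 2 ≤ ∫ s in Ioi 0, g s ^ 2 :=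
    setIntegral_mono_set hg2 (Eventually.of_forall fun s => sq_nonneg _)
      (HasSubset.Subset.eventuallyLE hsub)
  -- bound on sqrt of the Gaussian integral
  have hquarter : Real.sqrt (Real.sqrt T) = T ^ ((1:ℝ)/4) := by
    rw [Real.sqrt_eq_rpow, Real.sqrt_eq_rpow, ← Real.rpow_mul hT.le]
    norm_num
  have hwbound : Real.sqrt (∫ s in Ioi (0:ℝ), w s ^ 2) ≤ C * T ^ ((1:ℝ)/4) := by
    rw [hwval, Real.sqrt_mul (by positivity), hquarter]
    refine mul_le_mul_of_nonneg_right ?_ (Real.rpow_nonneg hT.le _)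
    rw [hC]
    linarith [Real.sqrt_nonneg (Real.sqrt (8 * π / (1 - ν)) / 2)]
  -- put everything together
  calc |Real.exp (ν * z ^ 2 / (8 * T)) * f z|
      ≤ ∫ s in Ioi z, Real.exp (ν * z ^ 2 / (8 * T)) * |deriv f s| := step1
    _ ≤ ∫ s in Ioi z, w s * |g s| := step2
    _ ≤ Real.sqrt (∫ s in Ioi z, w s ^ 2) * Real.sqrt (∫ s in Ioi z, g s ^ 2) := hCS
    _ ≤ Real.sqrt (∫ s in Ioi (0:ℝ), w s ^ 2) * Real.sqrt (∫ s in Ioi (0:ℝ), g s ^ 2) := by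
        exact mul_le_mul (Real.sqrt_le_sqrt hwmono) (Real.sqrt_le_sqrt hgmono)
          (Real.sqrt_nonneg _) (Real.sqrt_nonneg _)
    _ ≤ C * T ^ ((1:ℝ)/4) * Real.sqrt (∫ s in Ioi (0:ℝ), g s ^ 2) :=
        mul_le_mul_of_nonneg_right hwbound (Real.sqrt_nonneg _)
end

section
/- Let t ≥ 0, ⟨t⟩ = 1+t, and let ℌ, M : [0,∞) → ℝ solve ∂_z (∫_z^∞ M ds) + (z/(2⟨t⟩)) ∫_z^∞ M ds = −ℌ(z) with ∫_0^∞ M ds = 0, i.e. ℌ(z) = M(z) − (z/(2⟨t⟩)) ∫_z^∞ M ds. Then the map M ↦ ℌ can be inverted: ∫_z^∞ M(s) ds = e^{−z²/(4⟨t⟩)} ∫_0^z (−ℌ(s)) e^{s²/(4⟨t⟩)} ds, and consequently for 0 ≤ ν < 7/8, sup_z |θ_ν(z) ∫_z^∞ M ds| ≤ C_ν ⟨t⟩^{1/4} ‖θ_{7/8} ℌ‖_{L²(0,∞)}. -/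
open Real MeasureTheory Set

lemma aux_cs (f g : ℝ → ℝ) (hf : Continuous f) (hg : Continuous g) (a b : ℝ) (hab : a ≤ b) :
    (∫ s in a..b, f s * g s) ^ 2 ≤ (∫ s in a..b, f s ^ 2) * (∫ s in a..b, g s ^ 2) := by
  set A := ∫ s in a..b, f s ^ 2 with hA
  set B := ∫ s in a..b, g s ^ 2 with hB
  set I := ∫ s in a..b, f s * g s with hI
  have h : ∀ lam : ℝ, 0 ≤ B * (lam * lam) + (-2 * I) * lam + A := by
    intro lam
    have h0 : 0 ≤ ∫ s in a..b, (lam * g s - f s) ^ 2 :=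
      intervalIntegral.integral_nonneg hab (fun s _ => sq_nonneg _)
    have hexp : (∫ s in a..b, (lam * g s - f s) ^ 2)
        = B * (lam * lam) + (-2 * I) * lam + A := by
      have heq : ∀ s, (lam * g s - f s) ^ 2
          = lam * lam * g s ^ 2 - 2 * lam * (f s * g s) + f s ^ 2 := by intro s; ring
      simp_rw [heq]
      rw [intervalIntegral.integral_add (f := fun s => lam * lam * g s ^ 2 - 2 * lam * (f s * g s)) (g := fun s => f s ^ 2) (((continuous_const.mul (hg.pow 2)).sub
            ((continuous_const.mul (hf.mul hg)))).intervalIntegrable a b)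
            ((hf.pow 2).intervalIntegrable a b),
          intervalIntegral.integral_sub (f := fun s => lam * lam * g s ^ 2) (g := fun s => 2 * lam * (f s * g s)) ((continuous_const.mul (hg.pow 2)).intervalIntegrable a b)
            ((continuous_const.mul (hf.mul hg)).intervalIntegrable a b),
          intervalIntegral.integral_const_mul, intervalIntegral.integral_const_mul]
      ring
    linarith
  have hd := discrim_le_zero h
  rw [discrim] at hd
  nlinarith [hd]

lemma aux_gauss (c z : ℝ) (hc : 0 < c) (hz : 0 ≤ z) :
    (∫ s in (0:ℝ)..z, Real.exp (c * (s ^ 2 - z ^ 2))) ≤ 1 / Real.sqrt c := by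
  have hsc : 0 < Real.sqrt c := Real.sqrt_pos.mpr hc
  have hcont1 : Continuous fun s : ℝ => Real.exp (c * (s ^ 2 - z ^ 2)) := by continuity
  rcases le_or_gt z (1 / Real.sqrt c) with h | h
  · calc (∫ s in (0:ℝ)..z, Real.exp (c * (s ^ 2 - z ^ 2)))
        ≤ ∫ _ in (0:ℝ)..z, (1:ℝ) := by
          apply intervalIntegral.integral_mono_on hz (hcont1.intervalIntegrable 0 z)
            intervalIntegrable_const
          intro s hs
          rw [Real.exp_le_one_iff]
          nlinarith [mul_nonneg (mul_nonneg hc.le (sub_nonneg.2 hs.2)) (add_nonneg hs.1 hz)]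
      _ = z := by simp
      _ ≤ 1 / Real.sqrt c := h
  · have hz0 : 0 < z := lt_trans (by positivity) h
    have ha : 0 < c * z := by positivity
    have hcont2 : Continuous fun s : ℝ => Real.exp (c * z * (s - z)) := by continuity
    have hpt : ∀ s ∈ Icc (0:ℝ) z, Real.exp (c * (s ^ 2 - z ^ 2)) ≤ Real.exp (c * z * (s - z)) := by
      intro s hs
      apply Real.exp_le_exp.mpr
      nlinarith [mul_nonneg (mul_nonneg hc.le (sub_nonneg.2 hs.2)) hs.1]
    have hder : ∀ s ∈ uIcc (0:ℝ) z,
        HasDerivAt (fun s => Real.exp (c * z * (s - z)) / (c * z)) (Real.exp (c * z * (s - z))) s := by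
      intro s _
      have h1 : HasDerivAt (fun s : ℝ => c * z * (s - z)) (c * z) s := by
        simpa using ((hasDerivAt_id s).sub_const z).const_mul (c * z)
      have h3 := h1.exp.div_const (c * z)
      simpa [mul_div_assoc, mul_comm, mul_div_cancel_left₀ _ (ne_of_gt ha)] using h3
    have hval : (∫ s in (0:ℝ)..z, Real.exp (c * z * (s - z)))
        = Real.exp (c * z * (z - z)) / (c * z) - Real.exp (c * z * (0 - z)) / (c * z) := by
      rw [intervalIntegral.integral_eq_sub_of_hasDerivAt hder (hcont2.intervalIntegrable 0 z)]
    have hcz : Real.sqrt c ≤ c * z := by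
      have h2 : c * (1 / Real.sqrt c) ≤ c * z := mul_le_mul_of_nonneg_left h.le hc.le
      rwa [mul_one_div, Real.div_sqrt] at h2
    calc (∫ s in (0:ℝ)..z, Real.exp (c * (s ^ 2 - z ^ 2)))
        ≤ ∫ s in (0:ℝ)..z, Real.exp (c * z * (s - z)) :=
          intervalIntegral.integral_mono_on hz (hcont1.intervalIntegrable 0 z)
            (hcont2.intervalIntegrable 0 z) hpt
      _ = Real.exp 0 / (c * z) - Real.exp (c * z * (0 - z)) / (c * z) := by
          rw [hval]; ring_nf
      _ ≤ 1 / (c * z) := by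
          have : 0 < Real.exp (c * z * (0 - z)) / (c * z) := by positivity
          rw [Real.exp_zero]; linarith
      _ ≤ 1 / Real.sqrt c := one_div_le_one_div_of_le hsc hcz

/-- Inversion of the good-unknown relation `ℌ = M − (z/(2⟨t⟩)) ∫_z^∞ M`:
the tail `F(z) = ∫_z^∞ M` is given by the integrating-factor formula
`F(z) = e^{−z²/(4⟨t⟩)} ∫₀^z (−ℌ(s)) e^{s²/(4⟨t⟩)} ds`, and for `0 ≤ ν < 7/8`
one has the weighted pointwise bound
`|θ_ν(z) F(z)| ≤ C_ν ⟨t⟩^{1/4} ‖θ_{7/8} ℌ‖_{L²(0,∞)}`, `θ_μ(z) = e^{μ z²/(8⟨t⟩)}`. -/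
theorem good_unknown_inversion (ν : ℝ) (hν0 : 0 ≤ ν) (hν1 : ν < 7/8) :
    ∃ C : ℝ, 0 < C ∧ ∀ t : ℝ, 0 ≤ t → ∀ M Hh : ℝ → ℝ,
      Continuous M →
      IntegrableOn M (Ioi 0) →
      (∫ s in Ioi (0:ℝ), M s) = 0 →
      (∀ z : ℝ, 0 ≤ z → Hh z = M z - z / (2 * (1 + t)) * ∫ s in Ioi z, M s) →
      IntegrableOn (fun s => (Real.exp ((7/8) * s ^ 2 / (8 * (1 + t))) * Hh s) ^ 2) (Ioi 0) →
      (∀ z : ℝ, 0 ≤ z →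
          (∫ s in Ioi z, M s) = Real.exp (-z ^ 2 / (4 * (1 + t))) *
            ∫ s in (0:ℝ)..z, (-Hh s) * Real.exp (s ^ 2 / (4 * (1 + t)))) ∧
        (∀ z : ℝ, 0 ≤ z →
          |Real.exp (ν * z ^ 2 / (8 * (1 + t))) * ∫ s in Ioi z, M s|
            ≤ C * (1 + t) ^ ((1:ℝ)/4) *
                Real.sqrt (∫ s in Ioi (0:ℝ),
                  (Real.exp ((7/8) * s ^ 2 / (8 * (1 + t))) * Hh s) ^ 2)) := by
  refine ⟨2, two_pos, ?_⟩
  intro t ht M Hh hMc hMint hM0 hHh hHint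
  set T : ℝ := 1 + t with hTdef
  have hT : (0:ℝ) < T := by rw [hTdef]; linarith
  -- the primitive Φ
  set Φ : ℝ → ℝ := fun z => -∫ s in (0:ℝ)..z, M s with hΦdef
  have hΦd : ∀ z : ℝ, HasDerivAt Φ (-(M z)) z := fun z =>
    ((hMc.integral_hasStrictDerivAt 0 z).hasDerivAt).neg
  have hΦc : Continuous Φ := by
    rw [continuous_iff_continuousAt]; exact fun z => (hΦd z).continuousAt
  -- tail integral equals Φ
  have hFΦ : ∀ z : ℝ, 0 ≤ z → (∫ s in Ioi z, M s) = Φ z := by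
    intro z hz
    have hsplit := MeasureTheory.setIntegral_union (Set.Ioc_disjoint_Ioi le_rfl)
      measurableSet_Ioi (hMint.mono_set Set.Ioc_subset_Ioi_self)
      (hMint.mono_set (Set.Ioi_subset_Ioi hz)) (f := M) (μ := volume)
    rw [Set.Ioc_union_Ioi_eq_Ioi hz, hM0] at hsplit
    have h2 : ∫ s in (0:ℝ)..z, M s = ∫ s in Ioc 0 z, M s := intervalIntegral.integral_of_le hz
    simp only [hΦdef, h2]
    linarith
  -- continuous version of Hh
  set g : ℝ → ℝ := fun s => M s - s / (2 * T) * Φ s with hgdef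
  have hgc : Continuous g := hMc.sub ((continuous_id.div_const _).mul hΦc)
  have hHg : ∀ s : ℝ, 0 ≤ s → Hh s = g s := by
    intro s hs; rw [hHh s hs, hFΦ s hs]
  -- derivative of the integrating-factor product
  have hexp_d : ∀ z : ℝ, HasDerivAt (fun z : ℝ => Real.exp (z ^ 2 / (4 * T)))
      (Real.exp (z ^ 2 / (4 * T)) * (2 * z / (4 * T))) z := by
    intro z
    have h1 := ((hasDerivAt_pow 2 z).div_const (4 * T)).exp
    simpa using h1
  have hGd : ∀ z : ℝ, HasDerivAt (fun z => Real.exp (z ^ 2 / (4 * T)) * Φ z)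
      ((-(g z)) * Real.exp (z ^ 2 / (4 * T))) z := by
    intro z
    have h1 := (hexp_d z).mul (hΦd z)
    convert h1 using 1
    · rfl
    · rfl
    · rfl
    simp only [hgdef]
    field_simp
    ring
  have hkey : ∀ z : ℝ, Real.exp (z ^ 2 / (4 * T)) * Φ z
      = ∫ s in (0:ℝ)..z, (-(g s)) * Real.exp (s ^ 2 / (4 * T)) := by
    intro z
    have h1 := intervalIntegral.integral_eq_sub_of_hasDerivAt (a := 0) (b := z)
      (fun s _ => hGd s)
      ((hgc.neg.mul (((continuous_pow 2).div_const (4 * T)).rexp)).intervalIntegrable 0 z)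
    have h0 : Φ 0 = 0 := by simp [hΦdef]
    rw [h1, h0]
    simp
  -- Part 1
  have part1 : ∀ z : ℝ, 0 ≤ z →
      (∫ s in Ioi z, M s) = Real.exp (-z ^ 2 / (4 * T)) *
        ∫ s in (0:ℝ)..z, (-Hh s) * Real.exp (s ^ 2 / (4 * T)) := by
    intro z hz
    have hcongr : (∫ s in (0:ℝ)..z, (-Hh s) * Real.exp (s ^ 2 / (4 * T)))
        = ∫ s in (0:ℝ)..z, (-(g s)) * Real.exp (s ^ 2 / (4 * T)) := by
      apply intervalIntegral.integral_congr
      intro s hs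
      rw [Set.uIcc_of_le hz] at hs
      show -Hh s * Real.exp (s ^ 2 / (4 * T)) = -g s * Real.exp (s ^ 2 / (4 * T))
      rw [hHg s hs.1]
    rw [hFΦ z hz, hcongr, ← hkey z, ← mul_assoc, ← Real.exp_add]
    rw [show -z ^ 2 / (4 * T) + z ^ 2 / (4 * T) = 0 by ring, Real.exp_zero, one_mul]
  refine ⟨part1, ?_⟩
  -- Part 2
  intro z hz
  -- notation
  set IH : ℝ := ∫ s in Ioi (0:ℝ), (Real.exp (7/8 * s ^ 2 / (8 * T)) * Hh s) ^ 2 with hIHdef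
  have hIH0 : 0 ≤ IH := by
    rw [hIHdef]; exact setIntegral_nonneg measurableSet_Ioi (fun s _ => sq_nonneg _)
  set f : ℝ → ℝ := fun s => |Real.exp (7/8 * s ^ 2 / (8 * T)) * g s| with hfdef
  set k : ℝ → ℝ := fun s => Real.exp (9 * s ^ 2 / (64 * T)) with hkdef
  have hfc : Continuous f :=
    ((((continuous_const.mul (continuous_pow 2)).div_const _).rexp).mul hgc).abs
  have hkc : Continuous k := ((continuous_const.mul (continuous_pow 2)).div_const _).rexp
  set A : ℝ := ∫ s in (0:ℝ)..z, f s ^ 2 with hAdef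
  set Kz : ℝ := ∫ s in (0:ℝ)..z, k s ^ 2 with hKdef
  set J : ℝ := ∫ s in (0:ℝ)..z, f s * k s with hJdef
  have hKz0 : 0 ≤ Kz := by
    rw [hKdef]; exact intervalIntegral.integral_nonneg hz (fun s _ => sq_nonneg _)
  have hJ0 : 0 ≤ J := by
    rw [hJdef]
    exact intervalIntegral.integral_nonneg hz
      (fun s _ => mul_nonneg (abs_nonneg _) (Real.exp_pos _).le)
  -- step 1 : |∫ (-g) e| ≤ J
  have hstep1 : |∫ s in (0:ℝ)..z, (-(g s)) * Real.exp (s ^ 2 / (4 * T))| ≤ J := by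
    have h1 := intervalIntegral.abs_integral_le_integral_abs (a := 0) (b := z) (μ := volume)
      (f := fun s => (-(g s)) * Real.exp (s ^ 2 / (4 * T))) hz
    refine h1.trans (le_of_eq ?_)
    rw [hJdef]
    apply intervalIntegral.integral_congr
    intro s _
    have hsplitexp : Real.exp (s ^ 2 / (4 * T))
        = Real.exp (7/8 * s ^ 2 / (8 * T)) * Real.exp (9 * s ^ 2 / (64 * T)) := by
      rw [← Real.exp_add]
      congr 1
      field_simp
      ring
    simp only [hfdef, hkdef, abs_mul, abs_neg, hsplitexp,
      abs_of_pos (Real.exp_pos _)]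
    ring
  -- step 2 : Cauchy-Schwarz
  have hCS : J ^ 2 ≤ A * Kz := aux_cs f k hfc hkc 0 z hz
  -- step 3 : A ≤ IH
  have hA_le : A ≤ IH := by
    have h1 : A = ∫ s in Ioc (0:ℝ) z, (Real.exp (7/8 * s ^ 2 / (8 * T)) * Hh s) ^ 2 := by
      rw [hAdef, intervalIntegral.integral_of_le hz]
      apply setIntegral_congr_fun measurableSet_Ioc
      intro s hs
      simp only [hfdef, sq_abs]
      rw [hHg s hs.1.le]
    rw [h1, hIHdef]
    exact setIntegral_mono_set hHint (Filter.Eventually.of_forall (fun s => sq_nonneg _))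
      (HasSubset.Subset.eventuallyLE Set.Ioc_subset_Ioi_self)
  have hA0 : 0 ≤ A := by
    rw [hAdef]; exact intervalIntegral.integral_nonneg hz (fun s _ => sq_nonneg _)
  -- step 4 : E² Kz ≤ 4 √T
  set E : ℝ := Real.exp (ν * z ^ 2 / (8 * T)) * Real.exp (-z ^ 2 / (4 * T)) with hEdef
  have hE0 : 0 < E := mul_pos (Real.exp_pos _) (Real.exp_pos _)
  have hc : (0:ℝ) < 9 / (32 * T) := by positivity
  have hEK : E ^ 2 * Kz ≤ 4 * Real.sqrt T := by
    have hE2 : E ^ 2 = Real.exp ((8 * ν - 16) * z ^ 2 / (32 * T)) := by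
      rw [hEdef, ← Real.exp_add, sq, ← Real.exp_add]
      congr 1
      field_simp
      ring
    have hE2le : E ^ 2 ≤ Real.exp (-(9 * z ^ 2 / (32 * T))) := by
      rw [hE2]
      apply Real.exp_le_exp.mpr
      rw [← neg_div, div_eq_mul_inv, div_eq_mul_inv]
      have hTinv : (0:ℝ) < (32 * T)⁻¹ := by positivity
      apply mul_le_mul_of_nonneg_right _ hTinv.le
      nlinarith [sq_nonneg z]
    have hmain : Real.exp (-(9 * z ^ 2 / (32 * T))) * Kz ≤ 2 * Real.sqrt T := by
      have heq : Real.exp (-(9 * z ^ 2 / (32 * T))) * Kz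
          = ∫ s in (0:ℝ)..z, Real.exp (9 / (32 * T) * (s ^ 2 - z ^ 2)) := by
        rw [hKdef, ← intervalIntegral.integral_const_mul]
        apply intervalIntegral.integral_congr
        intro s _
        show Real.exp (-(9 * z ^ 2 / (32 * T))) * k s ^ 2
            = Real.exp (9 / (32 * T) * (s ^ 2 - z ^ 2))
        rw [hkdef]
        simp only [sq, ← Real.exp_add]
        congr 1
        field_simp
        ring
      rw [heq]
      have h2 := aux_gauss (9 / (32 * T)) z hc hz
      refine h2.trans ?_
      have h3 : (1:ℝ) / Real.sqrt (9 / (32 * T)) = Real.sqrt ((9 / (32 * T))⁻¹) := by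
        rw [one_div, Real.sqrt_inv]
      rw [h3]
      have h4 : ((9:ℝ) / (32 * T))⁻¹ ≤ 4 * T := by
        rw [inv_div]
        rw [div_le_iff₀ (by norm_num : (0:ℝ) < 9)]
        linarith
      refine (Real.sqrt_le_sqrt h4).trans (le_of_eq ?_)
      rw [show (4:ℝ) * T = 2 ^ 2 * T by norm_num,
        Real.sqrt_mul (by positivity), Real.sqrt_sq (by norm_num : (0:ℝ) ≤ 2)]
    calc E ^ 2 * Kz ≤ Real.exp (-(9 * z ^ 2 / (32 * T))) * Kz :=
          mul_le_mul_of_nonneg_right hE2le hKz0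
      _ ≤ 2 * Real.sqrt T := hmain
      _ ≤ 4 * Real.sqrt T := by
          have := Real.sqrt_nonneg T; linarith
  -- step 5 : combine
  have hEsK : E * Real.sqrt Kz ≤ 2 * T ^ ((1:ℝ)/4) := by
    have h1 : E * Real.sqrt Kz = Real.sqrt (E ^ 2 * Kz) := by
      rw [Real.sqrt_mul (sq_nonneg E), Real.sqrt_sq hE0.le]
    rw [h1]
    have h2 : Real.sqrt (E ^ 2 * Kz) ≤ Real.sqrt (4 * Real.sqrt T) := Real.sqrt_le_sqrt hEK
    refine h2.trans (le_of_eq ?_)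
    rw [Real.sqrt_mul (by norm_num : (0:ℝ) ≤ 4)]
    rw [show (4:ℝ) = 2^2 by norm_num, Real.sqrt_sq (by norm_num : (0:ℝ) ≤ 2)]
    congr 1
    rw [Real.sqrt_eq_rpow, Real.sqrt_eq_rpow, ← Real.rpow_mul hT.le]
    norm_num
  -- final chain
  rw [part1 z hz]
  have hcongr : (∫ s in (0:ℝ)..z, (-Hh s) * Real.exp (s ^ 2 / (4 * T)))
      = ∫ s in (0:ℝ)..z, (-(g s)) * Real.exp (s ^ 2 / (4 * T)) := by
    apply intervalIntegral.integral_congr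
    intro s hs
    rw [Set.uIcc_of_le hz] at hs
    show -Hh s * Real.exp (s ^ 2 / (4 * T)) = -g s * Real.exp (s ^ 2 / (4 * T))
    rw [hHg s hs.1]
  rw [hcongr]
  have hJle : J ≤ Real.sqrt Kz * Real.sqrt IH := by
    have h1 : J = Real.sqrt (J ^ 2) := (Real.sqrt_sq hJ0).symm
    rw [h1]
    have h2 : J ^ 2 ≤ Kz * IH := by nlinarith
    refine (Real.sqrt_le_sqrt h2).trans (le_of_eq ?_)
    exact Real.sqrt_mul hKz0 IH
  calc |Real.exp (ν * z ^ 2 / (8 * T)) * (Real.exp (-z ^ 2 / (4 * T)) *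
          ∫ s in (0:ℝ)..z, (-(g s)) * Real.exp (s ^ 2 / (4 * T)))|
      = E * |∫ s in (0:ℝ)..z, (-(g s)) * Real.exp (s ^ 2 / (4 * T))| := by
        rw [← mul_assoc, abs_mul]
        congr 1
        exact abs_of_pos hE0
    _ ≤ E * J := mul_le_mul_of_nonneg_left hstep1 hE0.le
    _ ≤ E * (Real.sqrt Kz * Real.sqrt IH) := mul_le_mul_of_nonneg_left hJle hE0.le
    _ = (E * Real.sqrt Kz) * Real.sqrt IH := by ring
    _ ≤ (2 * T ^ ((1:ℝ)/4)) * Real.sqrt IH :=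
        mul_le_mul_of_nonneg_right hEsK (Real.sqrt_nonneg _)
    _ = 2 * T ^ ((1:ℝ)/4) * Real.sqrt IH := by ring
end
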